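/- arXiv:2508.20531 — 2 statements merged into one kernel-verified Lean document; each statement's English description precedes it below -/
import Mathlib

section
/- For any reals r̄ > 0 and X, Z > 0, the double integral ∫_{-X}^{X} ∫_{-Z}^{Z} (1 + r̄² + 2x + x² + z²)^{-3/2} dz dx equals (2/r̄)·[arctan( Z(1+X) / ( r̄·√(X² + Z² + 2X + r̄² + 1) ) ) − arctan( Z(1−X) / ( r̄·√(X² + Z² − 2X + r̄² + 1) ) )], provided 1 + r̄² + 2x + x² + z² > 0 for all x ∈ [−X, X] (e.g. assuming X < 1 or just r̄ > 0, which ensures 1 + r̄² + 2x + x² = (1+x)² + r̄² > 0). -/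
open Real intervalIntegral

/-!
With `c = (1 + x)² + r̄²` the integrand is `(c + z²)^(-3/2)`, whose antiderivative in `z` is
`z / (c √(c + z²))`. The resulting function of `u = 1 + x` is in turn the derivative of
`(1/r̄) arctan (Z u / (r̄ √(u² + r̄² + Z²)))`, so the double integral follows from two applications
of the fundamental theorem of calculus.
-/

lemma rpow_neg_three_halves {t : ℝ} (ht : 0 ≤ t) : t ^ (-(3 : ℝ) / 2) = (t * √t)⁻¹ := by
  rw [neg_div, rpow_neg ht, show (3 : ℝ) / 2 = 1 + 1 / 2 by norm_num,
    rpow_add' ht (by norm_num), rpow_one, sqrt_eq_rpow]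

lemma hasDerivAt_div_mul_sqrt_add_sq {c : ℝ} (hc : 0 < c) (z : ℝ) :
    HasDerivAt (fun z => z / (c * √(c + z ^ 2))) ((c + z ^ 2) ^ (-(3 : ℝ) / 2)) z := by
  have hpos : 0 < c + z ^ 2 := by positivity
  have hsq : √(c + z ^ 2) ^ 2 = c + z ^ 2 := sq_sqrt hpos.le
  have hsqrt : HasDerivAt (fun z => √(c + z ^ 2)) (2 * z / (2 * √(c + z ^ 2))) z := by
    simpa using ((hasDerivAt_pow 2 z).const_add c).sqrt hpos.ne'
  refine ((hasDerivAt_id' z).div (hsqrt.const_mul c) (by positivity)).congr_deriv ?_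
  rw [rpow_neg_three_halves hpos.le]
  field_simp
  linear_combination z ^ 2 * hsq

lemma integral_add_sq_rpow_neg_three_halves {c : ℝ} (hc : 0 < c) (a b : ℝ) :
    ∫ z in a..b, (c + z ^ 2) ^ (-(3 : ℝ) / 2) =
      b / (c * √(c + b ^ 2)) - a / (c * √(c + a ^ 2)) := by
  refine integral_eq_sub_of_hasDerivAt (fun z _ => hasDerivAt_div_mul_sqrt_add_sq hc z) ?_
  refine Continuous.intervalIntegrable ?_ a b
  exact (continuous_const.add (continuous_pow 2)).rpow_const fun z =>
    Or.inl (add_pos_of_pos_of_nonneg hc (sq_nonneg z)).ne'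

lemma hasDerivAt_arctan_div_mul_sqrt {r : ℝ} (hr : r ≠ 0) (Z u : ℝ) :
    HasDerivAt (fun u => arctan (Z * u / (r * √(u ^ 2 + r ^ 2 + Z ^ 2))))
      (r * Z / ((u ^ 2 + r ^ 2) * √(u ^ 2 + r ^ 2 + Z ^ 2))) u := by
  have hpos : 0 < u ^ 2 + r ^ 2 + Z ^ 2 := by positivity
  have hsq : √(u ^ 2 + r ^ 2 + Z ^ 2) ^ 2 = u ^ 2 + r ^ 2 + Z ^ 2 := sq_sqrt hpos.le
  have hsqrt : HasDerivAt (fun u => √(u ^ 2 + r ^ 2 + Z ^ 2))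
      (2 * u / (2 * √(u ^ 2 + r ^ 2 + Z ^ 2))) u := by
    simpa using (((hasDerivAt_pow 2 u).add_const (r ^ 2)).add_const (Z ^ 2)).sqrt hpos.ne'
  have hquot := ((hasDerivAt_id' u).const_mul Z).div (hsqrt.const_mul r) (by positivity)
  refine hquot.arctan.congr_deriv ?_
  simp only [Pi.div_apply]
  field_simp
  linear_combination Z * u ^ 2 * hsq

lemma integral_div_add_sq_mul_sqrt {r : ℝ} (hr : r ≠ 0) (Z a b : ℝ) :
    ∫ u in a..b, r * Z / ((u ^ 2 + r ^ 2) * √(u ^ 2 + r ^ 2 + Z ^ 2)) =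
      arctan (Z * b / (r * √(b ^ 2 + r ^ 2 + Z ^ 2))) -
        arctan (Z * a / (r * √(a ^ 2 + r ^ 2 + Z ^ 2))) := by
  refine integral_eq_sub_of_hasDerivAt (fun u _ => hasDerivAt_arctan_div_mul_sqrt hr Z u) ?_
  refine Continuous.intervalIntegrable ?_ a b
  refine continuous_const.div (by fun_prop) fun u => ?_
  have : 0 < u ^ 2 + r ^ 2 := by positivity
  positivity

theorem stmt1_general (r X Z : ℝ) (hr : 0 < r) :
    (∫ x in (-X)..X, ∫ z in (-Z)..Z, (1 + r ^ 2 + 2 * x + x ^ 2 + z ^ 2) ^ (-(3 : ℝ) / 2)) =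
      (2 / r) *
        (Real.arctan (Z * (1 + X) / (r * Real.sqrt (X ^ 2 + Z ^ 2 + 2 * X + r ^ 2 + 1))) -
         Real.arctan (Z * (1 - X) / (r * Real.sqrt (X ^ 2 + Z ^ 2 - 2 * X + r ^ 2 + 1)))) := by
  have inner_integral (x : ℝ) : ∫ z in (-Z)..Z, (1 + r ^ 2 + 2 * x + x ^ 2 + z ^ 2) ^ (-(3 : ℝ) / 2) =
      2 / r * (r * Z / (((1 + x) ^ 2 + r ^ 2) * √((1 + x) ^ 2 + r ^ 2 + Z ^ 2))) := by
    have hc : 0 < (1 + x) ^ 2 + r ^ 2 := by positivity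
    simp_rw [show ∀ z : ℝ, 1 + r ^ 2 + 2 * x + x ^ 2 + z ^ 2 = (1 + x) ^ 2 + r ^ 2 + z ^ 2 by
      intro z; ring]
    rw [integral_add_sq_rpow_neg_three_halves hc, neg_sq]
    field_simp
    ring
  calc _ = 2 / r * ∫ u in (1 - X)..(1 + X),
          r * Z / ((u ^ 2 + r ^ 2) * √(u ^ 2 + r ^ 2 + Z ^ 2)) := by
        simp_rw [inner_integral, integral_const_mul, sub_eq_add_neg]
        rw [integral_comp_add_left (fun u => r * Z / ((u ^ 2 + r ^ 2) * √(u ^ 2 + r ^ 2 + Z ^ 2)))]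
    _ = _ := by
        rw [integral_div_add_sq_mul_sqrt hr.ne']
        ring_nf

/-- Closed-form evaluation of the projected-aperture near-field channel gain integral
(Lemma 1 of the paper):
`∫_{-X}^{X} ∫_{-Z}^{Z} (1 + r̄² + 2x + x² + z²)^{-3/2} dz dx
  = (2/r̄)·[arctan(Z(1+X)/(r̄√(X²+Z²+2X+r̄²+1))) − arctan(Z(1−X)/(r̄√(X²+Z²−2X+r̄²+1)))]`. -/
theorem stmt1 (r X Z : ℝ) (hr : 0 < r) (hX : 0 < X) (hZ : 0 < Z) :
    (∫ x in (-X)..X, ∫ z in (-Z)..Z, (1 + r ^ 2 + 2 * x + x ^ 2 + z ^ 2) ^ (-(3 : ℝ) / 2)) =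
      (2 / r) *
        (Real.arctan (Z * (1 + X) / (r * Real.sqrt (X ^ 2 + Z ^ 2 + 2 * X + r ^ 2 + 1))) -
         Real.arctan (Z * (1 - X) / (r * Real.sqrt (X ^ 2 + Z ^ 2 - 2 * X + r ^ 2 + 1)))) :=
  stmt1_general r X Z hr
end

section
/- Let r̄ > 0 and ε > 0. The function G(X, Z) = arctan( Z(1+X) / ( r̄·√((1+X)² + r̄² + Z²) ) ) − arctan( Z(1−X) / ( r̄·√((1−X)² + r̄² + Z²) ) ) is strictly monotonically increasing in each of X > 0 and Z > 0 separately. -/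
/-!
With `c = r² + Z²`, the two arctangent arguments are `(Z / r) · f (1 ± X)` for
`f t = t / √(t² + c) = sin (arctan (t / √c))`, which is strictly increasing; this gives monotonicity
in `X`. In `Z`, the derivative of `G` is `r / (r² + Z²) · (f (1 + X) - f (1 - X))`, positive for
`X > 0` by the same monotonicity.
-/

open Real

theorem div_sqrt_sq_add_eq_sin_arctan {c : ℝ} (hc : 0 < c) (t : ℝ) :
    t / √(t ^ 2 + c) = sin (arctan (t / √c)) := by
  rw [sin_arctan, div_pow, sq_sqrt hc.le, one_add_div hc.ne', add_comm c,
    sqrt_div' _ hc.le, div_div_div_cancel_right₀ (sqrt_pos.mpr hc).ne']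

theorem strictMono_div_sqrt_sq_add {c : ℝ} (hc : 0 < c) :
    StrictMono fun t : ℝ => t / √(t ^ 2 + c) := by
  simp_rw [div_sqrt_sq_add_eq_sin_arctan hc]
  exact sin_arctan_strictMono.comp (strictMono_id.div_const (sqrt_pos.mpr hc))

theorem strictMono_mul_div_mul_sqrt {r z : ℝ} (hr : 0 < r) (hz : 0 < z) :
    StrictMono fun a : ℝ => z * a / (r * √(a ^ 2 + r ^ 2 + z ^ 2)) := by
  have h : (fun a : ℝ => z * a / (r * √(a ^ 2 + r ^ 2 + z ^ 2))) =
      fun a => z / r * (a / √(a ^ 2 + (r ^ 2 + z ^ 2))) := by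
    ext a
    rw [add_assoc]
    ring
  rw [h]
  exact (strictMono_div_sqrt_sq_add (by positivity)).const_mul (div_pos hz hr)

theorem hasDerivAt_arctan_mul_div_mul_sqrt {r : ℝ} (hr : r ≠ 0) (a z : ℝ) :
    HasDerivAt (fun z : ℝ => arctan (z * a / (r * √(a ^ 2 + r ^ 2 + z ^ 2))))
      (r / (r ^ 2 + z ^ 2) * (a / √(a ^ 2 + r ^ 2 + z ^ 2))) z := by
  have hq : 0 < a ^ 2 + r ^ 2 + z ^ 2 := by positivity
  have hs : √(a ^ 2 + r ^ 2 + z ^ 2) ^ 2 = a ^ 2 + r ^ 2 + z ^ 2 := sq_sqrt hq.le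
  have hs0 : 0 < √(a ^ 2 + r ^ 2 + z ^ 2) := sqrt_pos.mpr hq
  have hsqrt : HasDerivAt (fun z : ℝ => √(a ^ 2 + r ^ 2 + z ^ 2))
      (2 * z / (2 * √(a ^ 2 + r ^ 2 + z ^ 2))) z := by
    simpa using ((hasDerivAt_pow 2 z).const_add (a ^ 2 + r ^ 2)).sqrt hq.ne'
  convert ((hasDerivAt_mul_const a).fun_div (hsqrt.const_mul r)
    (mul_ne_zero hr hs0.ne')).arctan using 1
  field_simp
  rw [hs]
  ring

theorem stmt10_general (r : ℝ) (hr : 0 < r) :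
    let G : ℝ → ℝ → ℝ := fun X Z =>
      Real.arctan (Z * (1 + X) / (r * Real.sqrt ((1 + X) ^ 2 + r ^ 2 + Z ^ 2))) -
      Real.arctan (Z * (1 - X) / (r * Real.sqrt ((1 - X) ^ 2 + r ^ 2 + Z ^ 2)))
    (∀ Z : ℝ, 0 < Z → ∀ X₁ X₂ : ℝ, 0 < X₁ → X₁ < X₂ → G X₁ Z < G X₂ Z) ∧
    (∀ X : ℝ, 0 < X → ∀ Z₁ Z₂ : ℝ, 0 < Z₁ → Z₁ < Z₂ → G X Z₁ < G X Z₂) := by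
  intro G
  refine ⟨fun Z hZ X₁ X₂ _ hX => ?_, fun X hX Z₁ Z₂ _ hZ => ?_⟩
  · have harg := strictMono_mul_div_mul_sqrt hr hZ
    have hplus := arctan_strictMono (harg (by linarith : 1 + X₁ < 1 + X₂))
    have hminus := arctan_strictMono (harg (by linarith : 1 - X₂ < 1 - X₁))
    simp only [G]
    linarith
  · refine strictMono_of_deriv_pos (fun Z => ?_) hZ
    have hderiv := (hasDerivAt_arctan_mul_div_mul_sqrt hr.ne' (1 + X) Z).fun_sub
      (hasDerivAt_arctan_mul_div_mul_sqrt hr.ne' (1 - X) Z)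
    have hratio := strictMono_div_sqrt_sq_add (c := r ^ 2 + Z ^ 2) (by positivity)
      (by linarith : 1 - X < 1 + X)
    simp only [← add_assoc] at hratio
    rw [hderiv.deriv, ← mul_sub]
    exact mul_pos (by positivity) (sub_pos.mpr hratio)

/-- For `r̄ > 0` (and `ε > 0`), the function
`G(X,Z) = arctan(Z(1+X)/(r̄√((1+X)²+r̄²+Z²))) − arctan(Z(1−X)/(r̄√((1−X)²+r̄²+Z²)))`
is strictly increasing in each of `X > 0` and `Z > 0` separately. -/
theorem stmt10 (r ε : ℝ) (hr : 0 < r) (hε : 0 < ε) :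
    let G : ℝ → ℝ → ℝ := fun X Z =>
      Real.arctan (Z * (1 + X) / (r * Real.sqrt ((1 + X) ^ 2 + r ^ 2 + Z ^ 2))) -
      Real.arctan (Z * (1 - X) / (r * Real.sqrt ((1 - X) ^ 2 + r ^ 2 + Z ^ 2)))
    (∀ Z : ℝ, 0 < Z → ∀ X₁ X₂ : ℝ, 0 < X₁ → X₁ < X₂ → G X₁ Z < G X₂ Z) ∧
    (∀ X : ℝ, 0 < X → ∀ Z₁ Z₂ : ℝ, 0 < Z₁ → Z₁ < Z₂ → G X Z₁ < G X Z₂) :=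
  stmt10_general r hr
end
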